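/- Radial coloring lemma: Suppose A_r (0 < r < 1/2) is given a proper radial coloring. Then the interior of each color class is contained in a single sector of angular width θ = arccos(1 - 1/(2(1/2 + r)²)). Equivalently, if two radial segments have the same color and the maximal distance between a point of one and a point of the other exceeds 1, the coloring cannot be proper. -/

import Mathlib

def annulus (r : ℝ) : Set ℂ := {p : ℂ | 1 / 2 - r ≤ ‖p‖ ∧ ‖p‖ ≤ 1 / 2 + r}

/-- The radial segment of the annulus `A_r` at angle `β`. -/
def radialSegment (r β : ℝ) : Set ℂ :=
  (fun t : ℝ => (t : ℂ) * Complex.exp (β * Complex.I)) '' Set.Icc (1 / 2 - r) (1 / 2 + r)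

/-!
A radial segment is connected, so the pairs of points of two radial segments form a connected
set on which the distance is continuous. The two inner endpoints are at distance at most
`2 (1/2 - r) < 1`, so if some pair is at distance more than `1`, the intermediate value theorem
yields a pair at distance exactly `1`; both points carry the common color of the segments.
-/

open Complex

theorem exists_norm_sub_eq_of_isPreconnected {E : Type*} [SeminormedAddCommGroup E]
    {S T : Set E} (hS : IsPreconnected S) (hT : IsPreconnected T) {p₀ q₀ p₁ q₁ : E}
    (hp₀ : p₀ ∈ S) (hq₀ : q₀ ∈ T) (hp₁ : p₁ ∈ S) (hq₁ : q₁ ∈ T) {d : ℝ}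
    (hnear : ‖p₀ - q₀‖ ≤ d) (hfar : d ≤ ‖p₁ - q₁‖) : ∃ p ∈ S, ∃ q ∈ T, ‖p - q‖ = d := by
  have hcont : ContinuousOn (fun x : E × E => ‖x.1 - x.2‖) (S ×ˢ T) := by fun_prop
  obtain ⟨⟨p, q⟩, ⟨hp, hq⟩, hpq⟩ := (hS.prod hT).intermediate_value
    (Set.mk_mem_prod hp₀ hq₀) (Set.mk_mem_prod hp₁ hq₁) hcont ⟨hnear, hfar⟩
  exact ⟨p, hp, q, hq, hpq⟩

theorem norm_ofReal_mul_exp_mul_I (t β : ℝ) : ‖(t : ℂ) * exp (β * I)‖ = |t| := by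
  rw [norm_mul, norm_exp_ofReal_mul_I, mul_one, norm_real, Real.norm_eq_abs]

theorem isPreconnected_radialSegment (r β : ℝ) : IsPreconnected (radialSegment r β) :=
  isPreconnected_Icc.image _ (by fun_prop)

theorem radialSegment_subset_annulus (r β : ℝ) : radialSegment r β ⊆ annulus r := by
  rintro _ ⟨t, ⟨ht₁, ht₂⟩, rfl⟩
  rw [annulus, Set.mem_ofPred_eq, norm_ofReal_mul_exp_mul_I]
  constructor <;> cases abs_cases t <;> linarith

theorem exists_mem_radialSegment_norm_sub_lt_one {r : ℝ} (hr0 : 0 < r) (hr1 : r < 1 / 2)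
    (β₁ β₂ : ℝ) : ∃ p ∈ radialSegment r β₁, ∃ q ∈ radialSegment r β₂, ‖p - q‖ < 1 := by
  have hmem : 1 / 2 - r ∈ Set.Icc (1 / 2 - r) (1 / 2 + r) := ⟨le_rfl, by linarith⟩
  refine ⟨_, ⟨_, hmem, rfl⟩, _, ⟨_, hmem, rfl⟩, ?_⟩
  calc _ ≤ ‖((1 / 2 - r : ℝ) : ℂ) * exp (β₁ * I)‖ + ‖((1 / 2 - r : ℝ) : ℂ) * exp (β₂ * I)‖ :=
        norm_sub_le _ _
    _ = 2 * (1 / 2 - r) := by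
        rw [norm_ofReal_mul_exp_mul_I, norm_ofReal_mul_exp_mul_I, abs_of_pos (by linarith)]
        ring
    _ < 1 := by linarith

theorem radial_coloring_lemma (r : ℝ) (hr0 : 0 < r) (hr1 : r < 1 / 2)
    (c : ℂ → ℕ) (k : ℕ) (β₁ β₂ : ℝ)
    (h₁ : ∀ p ∈ radialSegment r β₁, c p = k)
    (h₂ : ∀ p ∈ radialSegment r β₂, c p = k)
    (hfar : ∃ p ∈ radialSegment r β₁, ∃ q ∈ radialSegment r β₂, 1 < ‖p - q‖) :
    ∃ p ∈ annulus r, ∃ q ∈ annulus r, ‖p - q‖ = 1 ∧ c p = c q := by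
  obtain ⟨p₀, hp₀, q₀, hq₀, hnear⟩ := exists_mem_radialSegment_norm_sub_lt_one hr0 hr1 β₁ β₂
  obtain ⟨p₁, hp₁, q₁, hq₁, hfar⟩ := hfar
  obtain ⟨p, hp, q, hq, hpq⟩ := exists_norm_sub_eq_of_isPreconnected
    (isPreconnected_radialSegment r β₁) (isPreconnected_radialSegment r β₂)
    hp₀ hq₀ hp₁ hq₁ hnear.le hfar.le
  exact ⟨p, radialSegment_subset_annulus r β₁ hp, q, radialSegment_subset_annulus r β₂ hq,
    hpq, by rw [h₁ p hp, h₂ q hq]⟩
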